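/- Under the stated assumptions on V, for every j ∈ ℤ the discrete PML equation holds: −ω² ṽ_j = Σ_{r=-p}^{p} a_r ṽ_{j+r} + h Σ_{r=1}^{p} Σ_{ℓ=1}^{r} a_r (σ_{j+ℓ−1} Ψ̂^{(r+1−ℓ)}_{j+ℓ} − σ_{j−ℓ} Φ̂^{(r+1−ℓ)}_{j−ℓ}). -/

import Mathlib

/-- The discrete complex stretching grid
`Z_{j,k} = (j+k)h + i(h/ω) Σ_{ℓ=0}^{k-1} σ_ℓ` (the sum being 0 for `k ≤ 0`). -/
noncomputable def Zmap (h ω : ℝ) (σ : ℤ → ℝ) (j k : ℤ) : ℂ :=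
  ((j + k : ℤ) : ℂ) * (h : ℂ) +
    Complex.I * ((h : ℂ) / (ω : ℂ)) * ∑ l ∈ Finset.range k.toNat, ((σ l : ℝ) : ℂ)

/-- Discrete holomorphicity with respect to the grid `Zmap h ω σ`: the discrete
Cauchy–Riemann equations hold on every face. -/
def DiscreteHolo (h ω : ℝ) (σ : ℤ → ℝ) (F : ℤ → ℤ → ℂ) : Prop :=
  ∀ j k : ℤ,
    (F (j + 1) (k + 1) - F j k) * (Zmap h ω σ j (k + 1) - Zmap h ω σ (j + 1) k) =
    (F j (k + 1) - F (j + 1) k) * (Zmap h ω σ (j + 1) (k + 1) - Zmap h ω σ j k)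

/-- The auxiliary variable `Φ̂^{(r)}_j = (V_{−r+1,j+1} − V_{−r,j}) / (iω(2h + iσ_j h/ω))`. -/
noncomputable def PhiAux (h ω : ℝ) (σ : ℤ → ℝ) (V : ℤ → ℤ → ℂ) (r j : ℤ) : ℂ :=
  (V (-r + 1) (j + 1) - V (-r) j) /
    (Complex.I * (ω : ℂ) * (2 * (h : ℂ) + Complex.I * (σ j : ℂ) * (h : ℂ) / (ω : ℂ)))

/-- The auxiliary variable `Ψ̂^{(r)}_j = (V_{r,j} − V_{r−1,j−1}) / (iω(2h + iσ_{j−1} h/ω))`. -/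
noncomputable def PsiAux (h ω : ℝ) (σ : ℤ → ℝ) (V : ℤ → ℤ → ℂ) (r j : ℤ) : ℂ :=
  (V r j - V (r - 1) (j - 1)) /
    (Complex.I * (ω : ℂ) * (2 * (h : ℂ) + Complex.I * (σ (j - 1) : ℂ) * (h : ℂ) / (ω : ℂ)))

/-!
On the face with lower-left corner `(j, k)` the stretched grid has steps
`Z_{j,k+1} − Z_{j+1,k} = i(h/ω)σ_k` and `Z_{j+1,k+1} − Z_{j,k} = 2h + i(h/ω)σ_k`, so the discrete
Cauchy–Riemann equation says that `h σ_k` times the damped diagonal increment of `V` is the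
antidiagonal increment `V_{j+1,k} − V_{j,k+1}`. Hence `h σ Ψ̂` and `h σ Φ̂` are antidiagonal
increments, and the inner sums over `ℓ` telescope along the antidiagonals through `(±r, j)`, giving
`V_{r,j} − V_{0,j+r}` and `V_{0,j−r} − V_{−r,j}`. By the symmetry of `a`, the damping term becomes
`Σ_r a_r (V_{r,j} − V_{0,j+r})`, and the stencil equation at `(0, j)` replaces `Σ_r a_r V_{r,j}` by
`−ω² V_{0,j}`.
-/

open Finset

lemma Finset.sum_Icc_one_sub_add_one {M : Type*} [AddCommGroup M] (f : ℤ → M) {r : ℤ}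
    (hr : 0 ≤ r) : ∑ l ∈ Icc 1 r, (f l - f (l + 1)) = f 1 - f (r + 1) := by
  induction r, hr using Int.leInduction with
  | base => simp
  | succ r hr ih =>
    rw [sum_Icc_eq_sum_Ico_add _ (by omega), Ico_add_one_right_eq_Icc, ih]
    abel

lemma Finset.sum_Icc_neg_natCast_eq_add_sum {M : Type*} [AddCommGroup M] (f : ℤ → M) (N : ℕ) :
    ∑ r ∈ Icc (-(N : ℤ)) N, f r = f 0 + ∑ r ∈ Icc (1 : ℤ) N, (f r + f (-r)) := by
  induction N with
  | zero => simp
  | succ N ih =>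
    rw [Nat.cast_succ, sum_Icc_succ_eq_add_endpoints, ih,
      sum_Icc_eq_sum_Ico_add (u := (N : ℤ) + 1) _ (by omega), Ico_add_one_right_eq_Icc]
    abel

lemma sum_range_toNat_add_one {M : Type*} [AddCommMonoid M] {f : ℤ → M}
    (hf : ∀ k < 0, f k = 0) (k : ℤ) :
    ∑ l ∈ range (k + 1).toNat, f l = ∑ l ∈ range k.toNat, f l + f k := by
  rcases le_or_gt 0 k with hk | hk
  · rw [show (k + 1).toNat = k.toNat + 1 by omega, sum_range_succ, Int.toNat_of_nonneg hk]
  · simp [show (k + 1).toNat = 0 by omega, show k.toNat = 0 by omega, hf k hk]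

section Grid

variable {h ω : ℝ} {σ : ℤ → ℝ}

lemma stretch_ne_zero (hh : h ≠ 0) (s : ℝ) :
    2 * (h : ℂ) + Complex.I * (s : ℂ) * (h : ℂ) / (ω : ℂ) ≠ 0 := fun hc =>
  hh (by simpa using congrArg Complex.re hc)

variable (hσneg : ∀ k < 0, σ k = 0)
include hσneg

lemma Zmap_add_one_sub_Zmap_add_one (j k : ℤ) :
    Zmap h ω σ j (k + 1) - Zmap h ω σ (j + 1) k = Complex.I * (h / ω) * σ k := by
  simp only [Zmap, sum_range_toNat_add_one (f := fun l => (σ l : ℂ)) (by simpa using hσneg)]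
  push_cast
  ring

lemma Zmap_add_one_add_one_sub_Zmap (j k : ℤ) :
    Zmap h ω σ (j + 1) (k + 1) - Zmap h ω σ j k = 2 * h + Complex.I * (h / ω) * σ k := by
  simp only [Zmap, sum_range_toNat_add_one (f := fun l => (σ l : ℂ)) (by simpa using hσneg)]
  push_cast
  ring

variable {V : ℤ → ℤ → ℂ} (hV : DiscreteHolo h ω σ V) (hh : h ≠ 0) (hω : ω ≠ 0)
include hV hh hω

lemma DiscreteHolo.mul_diag_div_eq (j k : ℤ) :
    h * σ k * ((V (j + 1) (k + 1) - V j k) /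
      (Complex.I * ω * (2 * h + Complex.I * σ k * h / ω))) = V (j + 1) k - V j (k + 1) := by
  have hcr := hV j k
  rw [Zmap_add_one_sub_Zmap_add_one hσneg, Zmap_add_one_add_one_sub_Zmap hσneg] at hcr
  have hωc : (ω : ℂ) ≠ 0 := by exact_mod_cast hω
  rw [← mul_div_assoc, div_eq_iff (mul_ne_zero (mul_ne_zero Complex.I_ne_zero hωc)
    (stretch_ne_zero hh _))]
  field_simp at hcr ⊢
  linear_combination (-Complex.I) * hcr + ((V (j + 1) (k + 1) - V j k) * h * σ k) * Complex.I_sq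

lemma DiscreteHolo.h_mul_sigma_mul_PsiAux (s m : ℤ) :
    h * σ (m - 1) * PsiAux h ω σ V s m = V s (m - 1) - V (s - 1) m := by
  simpa only [PsiAux, sub_add_cancel] using hV.mul_diag_div_eq hσneg hh hω (s - 1) (m - 1)

lemma DiscreteHolo.h_mul_sigma_mul_PhiAux (s m : ℤ) :
    h * σ m * PhiAux h ω σ V s m = V (-s + 1) m - V (-s) (m + 1) :=
  hV.mul_diag_div_eq hσneg hh hω (-s) m

lemma DiscreteHolo.sum_h_mul_sigma_mul_PsiAux (j : ℤ) {r : ℤ} (hr : 0 ≤ r) :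
    ∑ l ∈ Icc 1 r, h * σ (j + l - 1) * PsiAux h ω σ V (r + 1 - l) (j + l) =
      V r j - V 0 (j + r) := by
  convert sum_Icc_one_sub_add_one (fun l => V (r + 1 - l) (j + l - 1)) hr using 1
  · refine sum_congr rfl fun l _ => ?_
    rw [hV.h_mul_sigma_mul_PsiAux hσneg hh hω]
    ring_nf
  · ring_nf

lemma DiscreteHolo.sum_h_mul_sigma_mul_PhiAux (j : ℤ) {r : ℤ} (hr : 0 ≤ r) :
    ∑ l ∈ Icc 1 r, h * σ (j - l) * PhiAux h ω σ V (r + 1 - l) (j - l) =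
      V 0 (j - r) - V (-r) j := by
  convert congrArg Neg.neg (sum_Icc_one_sub_add_one (fun l => V (l - r - 1) (j - l + 1)) hr)
    using 1
  · rw [← sum_neg_distrib]
    refine sum_congr rfl fun l _ => ?_
    rw [hV.h_mul_sigma_mul_PhiAux hσneg hh hω]
    ring_nf
  · ring_nf

end Grid

theorem stmt13_general
    (p : ℕ) (h : ℝ) (hh : 0 < h)
    (a : ℤ → ℝ) (hsym : ∀ r : ℤ, a (-r) = a r)
    (ω : ℝ) (hω : ω ≠ 0)
    (σ : ℤ → ℝ) (hσneg : ∀ j : ℤ, j < 0 → σ j = 0)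
    (V : ℤ → ℤ → ℂ) (hholo : DiscreteHolo h ω σ V)
    (heq : ∀ j k : ℤ, (∑ r ∈ Finset.Icc (-(p : ℤ)) (p : ℤ), (a r : ℂ) * V (j + r) k) +
        (ω : ℂ) ^ 2 * V j k = 0)
    (j : ℤ) :
    -(ω : ℂ) ^ 2 * V 0 j =
      (∑ r ∈ Finset.Icc (-(p : ℤ)) (p : ℤ), (a r : ℂ) * V 0 (j + r)) +
      (h : ℂ) * ∑ r ∈ Finset.Icc (1 : ℤ) (p : ℤ), ∑ l ∈ Finset.Icc (1 : ℤ) r,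
        (a r : ℂ) * ((σ (j + l - 1) : ℂ) * PsiAux h ω σ V (r + 1 - l) (j + l) -
          (σ (j - l) : ℂ) * PhiAux h ω σ V (r + 1 - l) (j - l)) := by
  set f : ℤ → ℂ := fun r => a r * (V r j - V 0 (j + r)) with hf
  have hrow : ∑ r ∈ Icc (-(p : ℤ)) p, f r =
      -(ω : ℂ) ^ 2 * V 0 j - ∑ r ∈ Icc (-(p : ℤ)) p, (a r : ℂ) * V 0 (j + r) := by
    simp only [hf, mul_sub, sum_sub_distrib]
    have hrow0 := heq 0 j
    simp only [zero_add] at hrow0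
    linear_combination hrow0
  have hdamp : ∀ r ∈ Icc (1 : ℤ) p, (h : ℂ) * ∑ l ∈ Icc 1 r, (a r : ℂ) *
      ((σ (j + l - 1) : ℂ) * PsiAux h ω σ V (r + 1 - l) (j + l) -
        (σ (j - l) : ℂ) * PhiAux h ω σ V (r + 1 - l) (j - l)) = f r + f (-r) := by
    intro r hr
    have hr0 : 0 ≤ r := by linarith [(mem_Icc.mp hr).1]
    calc _ = a r * (∑ l ∈ Icc 1 r, h * σ (j + l - 1) * PsiAux h ω σ V (r + 1 - l) (j + l) -
          ∑ l ∈ Icc 1 r, h * σ (j - l) * PhiAux h ω σ V (r + 1 - l) (j - l)) := by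
          rw [← sum_sub_distrib, mul_sum, mul_sum]
          exact sum_congr rfl fun l _ => by ring
      _ = f r + f (-r) := by
          rw [hholo.sum_h_mul_sigma_mul_PsiAux hσneg hh.ne' hω j hr0,
            hholo.sum_h_mul_sigma_mul_PhiAux hσneg hh.ne' hω j hr0]
          simp only [hf, hsym, ← sub_eq_add_neg]
          ring
  have hf0 : f 0 = 0 := by simp [hf]
  rw [mul_sum, sum_congr rfl hdamp]
  linear_combination sum_Icc_neg_natCast_eq_add_sum f p - hrow + hf0

/-- the discrete PML equation
`−ω² ṽ_j = Σ_r a_r ṽ_{j+r} + h Σ_{r=1}^{p} Σ_{ℓ=1}^{r} a_r (σ_{j+ℓ−1} Ψ̂^{(r+1−ℓ)}_{j+ℓ} − σ_{j−ℓ} Φ̂^{(r+1−ℓ)}_{j−ℓ})`,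
where `ṽ_j = V_{0,j}`. -/
theorem stmt13
    (p : ℕ) (hp : 1 ≤ p) (h : ℝ) (hh : 0 < h)
    (a : ℤ → ℝ) (hsym : ∀ r : ℤ, a (-r) = a r)
    (ω : ℝ) (hω : ω ≠ 0)
    (σ : ℤ → ℝ) (hσ : ∀ j : ℤ, 0 ≤ σ j) (hσneg : ∀ j : ℤ, j < 0 → σ j = 0)
    (V : ℤ → ℤ → ℂ) (hholo : DiscreteHolo h ω σ V)
    (heq : ∀ j k : ℤ, (∑ r ∈ Finset.Icc (-(p : ℤ)) (p : ℤ), (a r : ℂ) * V (j + r) k) +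
        (ω : ℂ) ^ 2 * V j k = 0)
    (j : ℤ) :
    -(ω : ℂ) ^ 2 * V 0 j =
      (∑ r ∈ Finset.Icc (-(p : ℤ)) (p : ℤ), (a r : ℂ) * V 0 (j + r)) +
      (h : ℂ) * ∑ r ∈ Finset.Icc (1 : ℤ) (p : ℤ), ∑ l ∈ Finset.Icc (1 : ℤ) r,
        (a r : ℂ) * ((σ (j + l - 1) : ℂ) * PsiAux h ω σ V (r + 1 - l) (j + l) -
          (σ (j - l) : ℂ) * PhiAux h ω σ V (r + 1 - l) (j - l)) :=
  stmt13_general p h hh a hsym ω hω σ hσneg V hholo heq j
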